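/- arXiv:2408.09712 — 3 statements merged into one kernel-verified Lean document; each statement's English description precedes it below -/
import Mathlib

section
/- Let p ∈ ℂ with 0 < |p| < 1 and Θ_p(z) = (z;p)_∞ (p/z;p)_∞ (p;p)_∞. Then Θ_p(z) = 0 if and only if z = p^k for some k ∈ ℤ, and each such zero is simple. -/
noncomputable def qpoch (x p : ℂ) : ℂ := ∏' n : ℕ, (1 - x * p ^ n)

noncomputable def jtheta (p z : ℂ) : ℂ := qpoch z p * qpoch (p / z) p * qpoch p p

open Filter Complex

lemma hasProd_zero_of_eq_zero {f : ℕ → ℂ} {m : ℕ} (h : f m = 0) : HasProd f 0 := by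
  have hev : ∀ᶠ s : Finset ℕ in Filter.atTop, ∏ i ∈ s, f i = 0 := by
    filter_upwards [Filter.eventually_ge_atTop ({m} : Finset ℕ)] with s hs
    exact Finset.prod_eq_zero (hs (Finset.mem_singleton_self m)) h
  exact Filter.Tendsto.congr' (by filter_upwards [hev] with s hs using hs.symm)
    tendsto_const_nhds

lemma log_summable {p x : ℂ} (hp : ‖p‖ < 1) :
    Summable (fun n : ℕ => Complex.log (1 - x * p ^ n)) := by
  have hg : Summable (fun n : ℕ => 3/2 * (‖x‖ * ‖p‖ ^ n)) :=
    ((summable_geometric_of_lt_one (norm_nonneg p) hp).mul_left _).mul_left _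
  refine Summable.of_norm_bounded_eventually hg ?_
  rw [Nat.cofinite_eq_atTop]
  have h0 : Tendsto (fun n : ℕ => ‖x‖ * ‖p‖ ^ n) atTop (nhds 0) := by
    simpa using (tendsto_pow_atTop_nhds_zero_of_lt_one (norm_nonneg p) hp).const_mul
      (‖x‖)
  filter_upwards [h0.eventually_le_const (by norm_num : (0:ℝ) < 1/2)] with n hn
  have hxn : ‖x * p ^ n‖ ≤ 1/2 := by
    simpa [norm_mul, norm_pow] using hn
  have := Complex.norm_log_one_add_half_le_self (z := -(x * p ^ n)) (by simpa using hxn)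
  calc ‖Complex.log (1 - x * p ^ n)‖ ≤ 3/2 * ‖x * p ^ n‖ := by
        simpa [sub_eq_add_neg] using this
    _ = 3/2 * (‖x‖ * ‖p‖ ^ n) := by
        simp [norm_mul, norm_pow]

lemma qpoch_hasProd_exp {p x : ℂ} (hp : ‖p‖ < 1)
    (hx : ∀ n : ℕ, x * p ^ n ≠ 1) :
    HasProd (fun n : ℕ => 1 - x * p ^ n)
      (Complex.exp (∑' n : ℕ, Complex.log (1 - x * p ^ n))) := by
  have hne : ∀ n : ℕ, 1 - x * p ^ n ≠ 0 := fun n => sub_ne_zero.mpr fun h => hx n h.symm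
  have hs := (log_summable (x := x) hp).hasSum
  have := hs.cexp
  refine this.congr_fun fun n => ?_
  exact (Complex.exp_log (hne n)).symm

lemma qpoch_multipliable (p x : ℂ) (hp : ‖p‖ < 1) :
    Multipliable (fun n : ℕ => 1 - x * p ^ n) := by
  by_cases h : ∀ n : ℕ, x * p ^ n ≠ 1
  · exact (qpoch_hasProd_exp hp h).multipliable
  · push_neg at h
    obtain ⟨n, hn⟩ := h
    exact ⟨0, hasProd_zero_of_eq_zero (f := fun n => 1 - x * p ^ n) (m := n) (by simp [hn])⟩

lemma qpoch_ne_zero {p x : ℂ} (hp : ‖p‖ < 1) (hx : ∀ n : ℕ, x * p ^ n ≠ 1) :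
    qpoch x p ≠ 0 := by
  rw [qpoch, (qpoch_hasProd_exp hp hx).tprod_eq]
  exact Complex.exp_ne_zero _

lemma qpoch_eq_zero_iff {p x : ℂ} (hp : ‖p‖ < 1) :
    qpoch x p = 0 ↔ ∃ n : ℕ, x * p ^ n = 1 := by
  constructor
  · intro h
    by_contra hc
    push_neg at hc
    exact qpoch_ne_zero hp hc h
  · rintro ⟨n, hn⟩
    have : (1 : ℂ) - x * p ^ n = 0 := by rw [hn]; ring
    exact (hasProd_zero_of_eq_zero (f := fun n => 1 - x * p ^ n) (m := n) this).tprod_eq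

lemma qpoch_shift_many (p x : ℂ) (hp : ‖p‖ < 1) (k : ℕ) :
    qpoch x p = (∏ i ∈ Finset.range k, (1 - x * p ^ i)) * qpoch (x * p ^ k) p := by
  have hm : Multipliable (fun n : ℕ => 1 - x * p ^ (n + k)) := by
    refine (qpoch_multipliable p (x * p ^ k) hp).congr fun n => ?_
    rw [pow_add]; ring
  have h := Multipliable.prod_mul_tprod_nat_mul' (f := fun n : ℕ => 1 - x * p ^ n) (k := k) hm
  rw [qpoch, ← h, qpoch]
  congr 1
  exact tprod_congr fun n => by rw [pow_add]; ring

lemma qpoch_shift (p x : ℂ) (hp : ‖p‖ < 1) :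
    qpoch x p = (1 - x) * qpoch (x * p) p := by
  simpa using qpoch_shift_many p x hp 1

lemma log_bound {z : ℂ} (h : ‖z‖ ≤ 1/2) :
    ‖Complex.log (1 - z)‖ ≤ 3/2 * ‖z‖ := by
  have := Complex.norm_log_one_add_half_le_self (z := -z) (by simpa using h)
  simpa [sub_eq_add_neg] using this

lemma qpoch_sub_one_small {p w : ℂ} (hp : ‖p‖ < 1)
    (hw : ‖w‖ ≤ (1 - ‖p‖) / 2) :
    ‖qpoch w p - 1‖ ≤ 3 * ‖w‖ / (1 - ‖p‖) := by
  set r := ‖p‖ with hr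
  have hr0 : 0 ≤ r := norm_nonneg p
  have h1r : 0 < 1 - r := by linarith
  have hw2 : ‖w‖ ≤ 1/2 := le_trans hw (by linarith)
  have habs : ∀ n : ℕ, ‖w * p ^ n‖ ≤ 1/2 := by
    intro n
    rw [norm_mul, norm_pow]
    calc ‖w‖ * r ^ n ≤ ‖w‖ * 1 :=
          mul_le_mul_of_nonneg_left (pow_le_one₀ hr0 hp.le) (norm_nonneg w)
      _ ≤ 1/2 := by rwa [mul_one]
  have hx : ∀ n : ℕ, w * p ^ n ≠ 1 := by
    intro n h
    have := habs n
    rw [h] at this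
    simp at this
    linarith
  have hsum := log_summable (p := p) (x := w) hp
  have hnorm : ∀ n : ℕ, ‖Complex.log (1 - w * p ^ n)‖ ≤ 3/2 * ‖w‖ * r ^ n := by
    intro n
    calc ‖Complex.log (1 - w * p ^ n)‖ ≤ 3/2 * ‖w * p ^ n‖ := log_bound (habs n)
      _ = 3/2 * ‖w‖ * r ^ n := by rw [norm_mul, norm_pow]; ring
  have hgs : Summable (fun n : ℕ => 3/2 * ‖w‖ * r ^ n) :=
    (summable_geometric_of_lt_one hr0 hp).mul_left _
  have hnsum : Summable (fun n : ℕ => ‖Complex.log (1 - w * p ^ n)‖) :=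
    Summable.of_nonneg_of_le (fun n => norm_nonneg _) hnorm hgs
  have hSbound : ‖∑' n : ℕ, Complex.log (1 - w * p ^ n)‖ ≤ 3/2 * ‖w‖ / (1 - r) := by
    calc ‖∑' n : ℕ, Complex.log (1 - w * p ^ n)‖ ≤ ∑' n : ℕ, ‖Complex.log (1 - w * p ^ n)‖ :=
          norm_tsum_le_tsum_norm hnsum
      _ ≤ ∑' n : ℕ, 3/2 * ‖w‖ * r ^ n := Summable.tsum_le_tsum hnorm hnsum hgs
      _ = 3/2 * ‖w‖ * (1 - r)⁻¹ := by
          rw [tsum_mul_left, tsum_geometric_of_lt_one hr0 hp]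
      _ = 3/2 * ‖w‖ / (1 - r) := by ring
  have hS1 : ‖∑' n : ℕ, Complex.log (1 - w * p ^ n)‖ ≤ 1 := by
    refine le_trans hSbound ?_
    rw [div_le_one h1r]
    linarith
  have heq : qpoch w p = Complex.exp (∑' n : ℕ, Complex.log (1 - w * p ^ n)) :=
    (qpoch_hasProd_exp hp hx).tprod_eq
  rw [heq]
  calc ‖Complex.exp _ - 1‖ ≤ 2 * ‖∑' n : ℕ, Complex.log (1 - w * p ^ n)‖ :=
        Complex.norm_exp_sub_one_le hS1
    _ ≤ 2 * (3/2 * ‖w‖ / (1 - r)) := by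
        have := hSbound
        linarith
    _ = 3 * ‖w‖ / (1 - r) := by ring

lemma partial_bound {p z : ℂ} (hp : ‖p‖ < 1) {R : ℝ} (hz : ‖z‖ ≤ R) (N : ℕ) :
    ‖∏ n ∈ Finset.range N, (1 - z * p ^ n)‖ ≤ Real.exp (R / (1 - ‖p‖)) := by
  set r := ‖p‖ with hr
  have hr0 : 0 ≤ r := norm_nonneg p
  have h1r : 0 < 1 - r := by linarith
  have hR0 : 0 ≤ R := le_trans (norm_nonneg z) hz
  rw [norm_prod]
  calc ∏ n ∈ Finset.range N, ‖1 - z * p ^ n‖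
      ≤ ∏ n ∈ Finset.range N, Real.exp (R * r ^ n) := by
        refine Finset.prod_le_prod (fun n _ => norm_nonneg _) fun n _ => ?_
        calc ‖1 - z * p ^ n‖ ≤ ‖(1:ℂ)‖ + ‖z * p ^ n‖ := by
              simpa [sub_eq_add_neg] using norm_add_le (1:ℂ) (-(z * p ^ n))
          _ ≤ 1 + R * r ^ n := by
              rw [norm_one, norm_mul, norm_pow]
              have : ‖z‖ * r ^ n ≤ R * r ^ n :=
                mul_le_mul_of_nonneg_right hz (pow_nonneg hr0 n)
              linarith
          _ ≤ Real.exp (R * r ^ n) := by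
              have := Real.add_one_le_exp (R * r ^ n)
              linarith
    _ = Real.exp (∑ n ∈ Finset.range N, R * r ^ n) := (Real.exp_sum _ _).symm
    _ ≤ Real.exp (R / (1 - r)) := by
        apply Real.exp_le_exp.mpr
        have hs : Summable (fun n : ℕ => R * r ^ n) :=
          (summable_geometric_of_lt_one hr0 hp).mul_left _
        calc ∑ n ∈ Finset.range N, R * r ^ n ≤ ∑' n : ℕ, R * r ^ n :=
              Summable.sum_le_tsum _ (fun n _ => mul_nonneg hR0 (pow_nonneg hr0 n)) hs
          _ = R * (1 - r)⁻¹ := by rw [tsum_mul_left, tsum_geometric_of_lt_one hr0 hp]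
          _ = R / (1 - r) := by ring

lemma qpoch_tendstoUniformlyOn {p : ℂ} (hp0 : 0 < ‖p‖) (hp : ‖p‖ < 1)
    (R : ℝ) (hR : 0 < R) :
    TendstoUniformlyOn (fun (N : ℕ) (z : ℂ) => ∏ n ∈ Finset.range N, (1 - z * p ^ n))
      (fun z => qpoch z p) Filter.atTop (Metric.closedBall 0 R) := by
  set r := ‖p‖ with hr
  have hr0 : 0 ≤ r := norm_nonneg p
  have h1r : 0 < 1 - r := by linarith
  set C := Real.exp (R / (1 - r)) with hC
  have hC0 : 0 < C := Real.exp_pos _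
  rw [Metric.tendstoUniformlyOn_iff]
  intro ε hε
  have htend : Filter.Tendsto (fun N : ℕ => C * (3 * (R * r ^ N) / (1 - r))) Filter.atTop
      (nhds 0) := by
    have := (tendsto_pow_atTop_nhds_zero_of_lt_one hr0 hp).const_mul R
    have := ((this.const_mul 3).div_const (1 - r)).const_mul C
    simpa using this
  have h1 : ∀ᶠ N : ℕ in Filter.atTop, C * (3 * (R * r ^ N) / (1 - r)) < ε :=
    htend.eventually_lt_const hε
  have h2 : ∀ᶠ N : ℕ in Filter.atTop, R * r ^ N ≤ (1 - r) / 2 := by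
    have := (tendsto_pow_atTop_nhds_zero_of_lt_one hr0 hp).const_mul R
    exact (by simpa using this : Filter.Tendsto (fun N : ℕ => R * r ^ N) Filter.atTop
      (nhds 0)).eventually_le_const (by linarith)
  filter_upwards [h1, h2] with N hN1 hN2
  intro z hz
  rw [Metric.mem_closedBall, dist_zero_right] at hz
  have hwabs : ‖z * p ^ N‖ ≤ R * r ^ N := by
    rw [norm_mul, norm_pow]
    exact mul_le_mul_of_nonneg_right hz (pow_nonneg hr0 N)
  have hsmall := qpoch_sub_one_small hp (w := z * p ^ N) (le_trans hwabs hN2)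
  have hsplit := qpoch_shift_many p z hp N
  rw [dist_eq_norm]
  have : qpoch z p - ∏ n ∈ Finset.range N, (1 - z * p ^ n)
      = (∏ n ∈ Finset.range N, (1 - z * p ^ n)) * (qpoch (z * p ^ N) p - 1) := by
    rw [hsplit]; ring
  rw [this, norm_mul]
  calc ‖∏ n ∈ Finset.range N, (1 - z * p ^ n)‖
        * ‖qpoch (z * p ^ N) p - 1‖
      ≤ C * (3 * ‖z * p ^ N‖ / (1 - r)) := by
        refine mul_le_mul (partial_bound hp hz N) hsmall (norm_nonneg _) hC0.le
    _ ≤ C * (3 * (R * r ^ N) / (1 - r)) := by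
        have h3 : 3 * ‖z * p ^ N‖ / (1 - r) ≤ 3 * (R * r ^ N) / (1 - r) := by
          gcongr
        exact mul_le_mul_of_nonneg_left h3 hC0.le
    _ < ε := hN1

lemma qpoch_differentiable {p : ℂ} (hp0 : 0 < ‖p‖) (hp : ‖p‖ < 1) :
    Differentiable ℂ (fun z : ℂ => qpoch z p) := by
  rw [← differentiableOn_univ]
  refine TendstoLocallyUniformlyOn.differentiableOn (φ := (Filter.atTop : Filter ℕ))
    (F := fun (N : ℕ) (z : ℂ) => ∏ n ∈ Finset.range N, (1 - z * p ^ n)) ?_ ?_ isOpen_univ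
  · rw [tendstoLocallyUniformlyOn_iff_forall_isCompact isOpen_univ]
    intro K _ hK
    obtain ⟨R, hR, hKR⟩ : ∃ R : ℝ, 0 < R ∧ K ⊆ Metric.closedBall 0 R := by
      obtain ⟨R, hKR⟩ := hK.isBounded.subset_closedBall 0
      exact ⟨max R 1, by positivity, hKR.trans (Metric.closedBall_subset_closedBall
        (le_max_left _ _))⟩
    exact (qpoch_tendstoUniformlyOn hp0 hp R hR).mono hKR
  · filter_upwards with N
    apply Differentiable.differentiableOn
    apply Differentiable.fun_finsetProd
    intro i _
    exact (differentiable_const 1).sub ((differentiable_id.mul (differentiable_const _)))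

section jtheta

variable {p : ℂ} (hp0 : 0 < ‖p‖) (hp : ‖p‖ < 1)

include hp0 hp

lemma pne : p ≠ 0 := by
  intro h; rw [h] at hp0; simp at hp0

lemma qpoch_p_ne_zero : qpoch p p ≠ 0 := by
  refine qpoch_ne_zero hp fun n h => ?_
  have : ‖p * p ^ n‖ < 1 := by
    rw [norm_mul, norm_pow]
    calc ‖p‖ * ‖p‖ ^ n ≤ ‖p‖ * 1 :=
        mul_le_mul_of_nonneg_left (pow_le_one₀ (norm_nonneg p) hp.le)
          (norm_nonneg p)
      _ < 1 := by rwa [mul_one]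
  rw [h] at this; simp at this

lemma jtheta_differentiableAt {z : ℂ} (hz : z ≠ 0) : DifferentiableAt ℂ (jtheta p) z := by
  have Q := qpoch_differentiable hp0 hp
  have h1 : DifferentiableAt ℂ (fun z : ℂ => qpoch (p / z) p) z := by
    have : DifferentiableAt ℂ (fun z : ℂ => p / z) z :=
      (differentiableAt_const p).div differentiableAt_id hz
    exact (Q.differentiableAt).comp z this
  exact ((Q.differentiableAt).mul h1).mul (differentiableAt_const _)

lemma jtheta_zero_iff {z : ℂ} (hz : z ≠ 0) : jtheta p z = 0 ↔ ∃ k : ℤ, z = p ^ k := by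
  have hpne : p ≠ 0 := pne hp0 hp
  rw [jtheta, mul_eq_zero, mul_eq_zero]
  constructor
  · rintro ((h | h) | h)
    · rw [qpoch_eq_zero_iff hp] at h
      obtain ⟨n, hn⟩ := h
      refine ⟨-(n : ℤ), ?_⟩
      rw [zpow_neg, zpow_natCast]
      exact eq_inv_of_mul_eq_one_left hn
    · rw [qpoch_eq_zero_iff hp] at h
      obtain ⟨n, hn⟩ := h
      refine ⟨(n : ℤ) + 1, ?_⟩
      have hpn : (p : ℂ) ^ n ≠ 0 := pow_ne_zero n hpne
      field_simp at hn
      rw [zpow_add_one₀ hpne, zpow_natCast]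
      rw [← hn]; ring
    · exact absurd h (qpoch_p_ne_zero hp0 hp)
  · rintro ⟨k, rfl⟩
    rcases k with n | n
    · rcases n with _ | m
      · left; left
        rw [qpoch_eq_zero_iff hp]
        exact ⟨0, by norm_num⟩
      · left; right
        rw [qpoch_eq_zero_iff hp]
        refine ⟨m, ?_⟩
        have h1 : (p : ℂ) ^ (Int.ofNat (m + 1)) = p * p ^ m := by
          rw [Int.ofNat_eq_coe, zpow_natCast, pow_succ]; ring
        rw [h1]
        have hpm : (p : ℂ) ^ m ≠ 0 := pow_ne_zero m hpne
        field_simp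
    · left; left
      rw [qpoch_eq_zero_iff hp]
      refine ⟨n + 1, ?_⟩
      rw [zpow_negSucc]
      exact inv_mul_cancel₀ (pow_ne_zero _ hpne)

lemma jtheta_eq_one_sub_mul (z : ℂ) :
    jtheta p z = (1 - z) * (qpoch (z * p) p * qpoch (p / z) p * qpoch p p) := by
  rw [jtheta, qpoch_shift p z hp]; ring

lemma jtheta_funct_eq {z : ℂ} (hz : z ≠ 0) : jtheta p (p * z) = -z⁻¹ * jtheta p z := by
  have hpne : p ≠ 0 := pne hp0 hp
  have h1 : p / (p * z) = z⁻¹ := by field_simp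
  have h2 : qpoch z⁻¹ p = (1 - z⁻¹) * qpoch (p / z) p := by
    rw [qpoch_shift p z⁻¹ hp]
    congr 2
    field_simp
  have h3 : qpoch z p = (1 - z) * qpoch (p * z) p := by
    rw [qpoch_shift p z hp, mul_comm z p]
  rw [jtheta, h1, h2, jtheta, h3]
  have : -z⁻¹ * (1 - z) = 1 - z⁻¹ := by rw [mul_sub, mul_one, neg_mul, inv_mul_cancel₀ hz]; ring
  rw [show -z⁻¹ * ((1 - z) * qpoch (p * z) p * qpoch (p / z) p * qpoch p p)
      = (-z⁻¹ * (1 - z)) * (qpoch (p * z) p * qpoch (p / z) p * qpoch p p) by ring, this]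
  ring

end jtheta

section deriv2

variable {p : ℂ} (hp0 : 0 < ‖p‖) (hp : ‖p‖ < 1)

include hp0 hp

lemma jtheta_deriv_one : deriv (jtheta p) 1 ≠ 0 := by
  set G : ℂ → ℂ := fun z => qpoch (z * p) p * qpoch (p / z) p * qpoch p p with hG
  have Q := qpoch_differentiable hp0 hp
  have hGd : DifferentiableAt ℂ G 1 := by
    have h1 : DifferentiableAt ℂ (fun z : ℂ => qpoch (z * p) p) 1 :=
      Q.differentiableAt.comp 1 (differentiableAt_id.mul (differentiableAt_const p))
    have h2 : DifferentiableAt ℂ (fun z : ℂ => qpoch (p / z) p) 1 :=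
      Q.differentiableAt.comp 1 ((differentiableAt_const p).div differentiableAt_id one_ne_zero)
    exact (h1.mul h2).mul (differentiableAt_const _)
  have h1 : HasDerivAt (fun z : ℂ => 1 - z) (-1) 1 := by
    simpa using ((hasDerivAt_id (1:ℂ)).const_sub 1)
  have hprod : HasDerivAt (fun z => (1 - z) * G z) ((-1) * G 1 + (1 - 1) * deriv G 1) 1 :=
    h1.mul hGd.hasDerivAt
  have heq : jtheta p = fun z => (1 - z) * G z :=
    funext fun z => jtheta_eq_one_sub_mul hp0 hp z
  rw [heq, hprod.deriv]
  have hG1 : G 1 = qpoch p p * qpoch p p * qpoch p p := by simp [hG]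
  have hq := qpoch_p_ne_zero hp0 hp
  rw [hG1]
  have : (-1 : ℂ) * (qpoch p p * qpoch p p * qpoch p p) + (1 - 1) * deriv G 1
      = -(qpoch p p * qpoch p p * qpoch p p) := by ring
  rw [this]
  simpa using mul_ne_zero (mul_ne_zero hq hq) hq

lemma jtheta_deriv_rec {z₀ : ℂ} (hz : z₀ ≠ 0) (h0 : jtheta p z₀ = 0) :
    p * deriv (jtheta p) (p * z₀) = -z₀⁻¹ * deriv (jtheta p) z₀ := by
  have hpne := pne hp0 hp
  have hpz : p * z₀ ≠ 0 := mul_ne_zero hpne hz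
  have hd2 := (jtheta_differentiableAt hp0 hp hpz).hasDerivAt
  have hinner : HasDerivAt (fun z : ℂ => p * z) p z₀ := by
    simpa using (hasDerivAt_id z₀).const_mul p
  have hca : HasDerivAt (fun z => jtheta p (p * z)) (deriv (jtheta p) (p * z₀) * p) z₀ :=
    HasDerivAt.comp z₀ hd2 hinner
  have hinv : HasDerivAt (fun z : ℂ => -z⁻¹) ((z₀ ^ 2)⁻¹) z₀ := by
    simpa using (hasDerivAt_inv hz).fun_neg
  have hcb : HasDerivAt (fun z => -z⁻¹ * jtheta p z)
      ((z₀ ^ 2)⁻¹ * jtheta p z₀ + (-z₀⁻¹) * deriv (jtheta p) z₀) z₀ :=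
    hinv.mul (jtheta_differentiableAt hp0 hp hz).hasDerivAt
  have hEq : (fun z => jtheta p (p * z)) =ᶠ[nhds z₀] (fun z => -z⁻¹ * jtheta p z) := by
    filter_upwards [isOpen_compl_singleton.mem_nhds
      (by simpa using hz : z₀ ∈ ({0}ᶜ : Set ℂ))] with z hz'
    exact jtheta_funct_eq hp0 hp (by simpa using hz')
  have hca' : HasDerivAt (fun z => -z⁻¹ * jtheta p z) (deriv (jtheta p) (p * z₀) * p) z₀ :=
    hca.congr_of_eventuallyEq hEq.symm
  have huniq := hca'.unique hcb
  rw [h0, mul_zero, zero_add] at huniq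
  rw [mul_comm p _, huniq]

lemma jtheta_deriv_ne_zero (k : ℤ) : deriv (jtheta p) (p ^ k) ≠ 0 := by
  have hpne := pne hp0 hp
  induction k using Int.induction_on with
  | zero => simpa using jtheta_deriv_one hp0 hp
  | succ k ih =>
    have hzk : (p : ℂ) ^ (k : ℤ) ≠ 0 := zpow_ne_zero _ hpne
    have h0 : jtheta p (p ^ (k : ℤ)) = 0 := (jtheta_zero_iff hp0 hp hzk).mpr ⟨k, rfl⟩
    have hrec := jtheta_deriv_rec hp0 hp hzk h0
    have hpk1 : p * p ^ (k : ℤ) = p ^ ((k : ℤ) + 1) := by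
      rw [zpow_add_one₀ hpne]; ring
    rw [hpk1] at hrec
    intro h
    rw [h, mul_zero] at hrec
    rcases mul_eq_zero.mp hrec.symm with h1 | h1
    · exact hzk (by simpa using h1)
    · exact ih h1
  | pred k ih =>
    have hz0 : (p : ℂ) ^ (-(k : ℤ) - 1) ≠ 0 := zpow_ne_zero _ hpne
    have h0 : jtheta p (p ^ (-(k : ℤ) - 1)) = 0 :=
      (jtheta_zero_iff hp0 hp hz0).mpr ⟨-(k : ℤ) - 1, rfl⟩
    have hrec := jtheta_deriv_rec hp0 hp hz0 h0
    have hpz : p * p ^ (-(k : ℤ) - 1) = p ^ (-(k : ℤ)) := by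
      rw [mul_comm, ← zpow_add_one₀ hpne]
      congr 1; ring
    rw [hpz] at hrec
    intro h
    rw [h, mul_zero] at hrec
    rcases mul_eq_zero.mp hrec with h1 | h1
    · exact hpne h1
    · exact ih h1

end deriv2

theorem theta_zeros (p : ℂ) (hp0 : 0 < ‖p‖) (hp : ‖p‖ < 1) :
    (∀ z : ℂ, z ≠ 0 → (jtheta p z = 0 ↔ ∃ k : ℤ, z = p ^ k)) ∧
    (∀ k : ℤ, deriv (jtheta p) (p ^ k) ≠ 0) :=
  ⟨fun _ hz => jtheta_zero_iff hp0 hp hz, fun k => jtheta_deriv_ne_zero hp0 hp k⟩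
end

section
/- Let p ∈ ℂ with |p| < 1. For every z ∈ ℂ^×, the Jacobi triple product identity holds: ∑_{n∈ℤ} (−1)^n p^{n(n−1)/2} z^n = (z;p)_∞ (p/z;p)_∞ (p;p)_∞ = Θ_p(z). -/
open Finset Filter Topology

namespace JTP

noncomputable def Dp (p : ℂ) (j : ℕ) : ℂ := ∏ i ∈ range j, (1 - p ^ ((i : ℤ) + 1))

noncomputable def Ap (p : ℂ) (N j : ℕ) : ℂ :=
  ∏ i ∈ range j, (1 - p ^ ((N : ℤ) - j + i + 1))

noncomputable def gb (p : ℂ) (N j : ℕ) : ℂ := Ap p N j / Dp p j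

lemma Dp_succ (p : ℂ) (j : ℕ) : Dp p (j + 1) = Dp p j * (1 - p ^ ((j : ℤ) + 1)) :=
  prod_range_succ _ _

lemma Ap_succ_left (p : ℂ) (N k : ℕ) :
    Ap p N (k + 1) = (1 - p ^ ((N : ℤ) - k)) * Ap p N k := by
  rw [Ap, prod_range_succ']
  rw [mul_comm]
  congr 1
  · push_cast; ring_nf
  · apply prod_congr rfl
    intro i _
    congr 1
    push_cast
    ring_nf

lemma Ap_succ_both (p : ℂ) (N k : ℕ) :
    Ap p (N + 1) (k + 1) = (1 - p ^ ((N : ℤ) + 1)) * Ap p N k := by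
  rw [Ap, prod_range_succ, mul_comm]
  congr 1
  · congr 1
    push_cast; ring_nf
  · apply prod_congr rfl
    intro i _
    congr 2
    push_cast; ring

lemma Ap_pascal (p : ℂ) (hp0 : p ≠ 0) (N k : ℕ) :
    Ap p (N + 1) (k + 1)
      = Ap p N (k + 1) + p ^ ((N : ℤ) - k) * (1 - p ^ ((k : ℤ) + 1)) * Ap p N k := by
  have h : p ^ ((N : ℤ) + 1) = p ^ ((N : ℤ) - k) * p ^ ((k : ℤ) + 1) := by
    rw [← zpow_add₀ hp0]; congr 1; ring
  rw [Ap_succ_both, Ap_succ_left, h]; ring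

lemma gb_zero (p : ℂ) (N : ℕ) : gb p N 0 = 1 := by
  simp [gb, Ap, Dp]

lemma Ap_top (p : ℂ) (N : ℕ) : Ap p N (N + 1) = 0 := by
  rw [Ap_succ_left]
  simp

lemma gb_pascal (p : ℂ) (hp0 : p ≠ 0) (hD : ∀ j, Dp p j ≠ 0) (N k : ℕ) :
    gb p (N + 1) (k + 1) = gb p N (k + 1) + p ^ ((N : ℤ) - k) * gb p N k := by
  have h1 := hD (k + 1)
  have h2 := hD k
  have h3 : (1 : ℂ) - p ^ ((k : ℤ) + 1) ≠ 0 := by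
    intro h
    apply h1
    rw [Dp_succ, h, mul_zero]
  rw [gb, gb, gb, Ap_pascal p hp0, Dp_succ]
  rw [Dp_succ] at h1
  field_simp

lemma tri_succ (j : ℕ) : ((j : ℤ) + 1) * j / 2 = (j : ℤ) * (j - 1) / 2 + j := by
  have h : ((j : ℤ) + 1) * j = (j : ℤ) * (j - 1) + j * 2 := by ring
  rw [h, Int.add_mul_ediv_right _ _ (by norm_num : (2 : ℤ) ≠ 0)]

lemma gauss (p : ℂ) (hp0 : p ≠ 0) (hD : ∀ j, Dp p j ≠ 0) (t : ℂ) (N : ℕ) :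
    ∏ i ∈ range N, (1 + t * p ^ (i : ℤ))
      = ∑ j ∈ range (N + 1), p ^ ((j : ℤ) * (j - 1) / 2) * gb p N j * t ^ j := by
  induction N with
  | zero => simp [gb_zero]
  | succ N ih =>
    rw [prod_range_succ, ih]
    have hext : ∑ j ∈ range (N + 1), p ^ ((j : ℤ) * (j - 1) / 2) * gb p N j * t ^ j
        = ∑ j ∈ range (N + 2), p ^ ((j : ℤ) * (j - 1) / 2) * gb p N j * t ^ j := by
      rw [sum_range_succ (n := N + 1)]
      have : gb p N (N + 1) = 0 := by rw [gb, Ap_top, zero_div]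
      rw [this]; ring
    rw [mul_add, mul_one]
    nth_rewrite 1 [hext]
    rw [sum_range_succ' _ (N + 1), sum_range_succ' _ (N + 1), sum_mul]
    have hterm : ∀ j ∈ range (N + 1),
        p ^ ((((j + 1 : ℕ)) : ℤ) * ((((j + 1 : ℕ)) : ℤ) - 1) / 2) * gb p (N + 1) (j + 1) * t ^ (j + 1)
          = p ^ ((((j + 1 : ℕ)) : ℤ) * ((((j + 1 : ℕ)) : ℤ) - 1) / 2) * gb p N (j + 1) * t ^ (j + 1)
            + p ^ ((j : ℤ) * ((j : ℤ) - 1) / 2) * gb p N j * t ^ j * (t * p ^ (N : ℤ)) := by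
      intro j _
      rw [gb_pascal p hp0 hD]
      have he1 : (((j + 1 : ℕ)) : ℤ) * ((((j + 1 : ℕ)) : ℤ) - 1) / 2
          = (j : ℤ) * ((j : ℤ) - 1) / 2 + j := by
        push_cast
        rw [show ((j : ℤ) + 1 - 1) = (j : ℤ) by ring]
        exact tri_succ j
      have he2 : p ^ ((((j + 1 : ℕ)) : ℤ) * ((((j + 1 : ℕ)) : ℤ) - 1) / 2) * p ^ ((N : ℤ) - j)
          = p ^ ((j : ℤ) * ((j : ℤ) - 1) / 2) * p ^ (N : ℤ) := by
        rw [← zpow_add₀ hp0, ← zpow_add₀ hp0, he1]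
        congr 1; ring
      rw [pow_succ]
      linear_combination gb p N j * t ^ j * t * he2
    rw [sum_congr rfl hterm, sum_add_distrib]
    simp [gb_zero]
    ring

lemma hSum2 (m : ℕ) : 2 * ∑ j ∈ range m, (j + 1) = m * (m + 1) := by
  induction m with
  | zero => simp
  | succ m ih => rw [sum_range_succ, mul_add, ih]; ring

lemma finite_id (p : ℂ) (hp0 : p ≠ 0) (hD : ∀ j, Dp p j ≠ 0) (z : ℂ) (hz : z ≠ 0) (m : ℕ) :
    (∏ j ∈ range m, (1 - z * p ^ j)) * (∏ j ∈ range m, (1 - (p / z) * p ^ j))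
      = ∑ j ∈ range (2 * m + 1),
          (-1 : ℂ) ^ ((j : ℤ) - m) * p ^ (((j : ℤ) - m) * (((j : ℤ) - m) - 1) / 2)
            * z ^ ((j : ℤ) - m) * gb p (2 * m) j := by
  -- Step 1 : rewrite second product
  have hterm : ∀ j ∈ range m,
      (1 - (p / z) * p ^ j) = ((-(p ^ (j + 1))) * z⁻¹) * (1 - z * p ^ (-(j : ℤ) - 1)) := by
    intro j _
    have hzp : p ^ (-(j : ℤ) - 1) = (p ^ (j + 1 : ℕ))⁻¹ := by
      rw [show (-(j : ℤ) - 1) = -((j + 1 : ℕ) : ℤ) by push_cast; ring, zpow_neg, zpow_natCast]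
    rw [hzp]
    have hpj : p ^ (j + 1 : ℕ) ≠ 0 := pow_ne_zero _ hp0
    field_simp
    ring
  have hP2 : (∏ j ∈ range m, (1 - (p / z) * p ^ j))
      = ((-1 : ℂ) ^ m * p ^ (∑ j ∈ range m, (j + 1)) * (z⁻¹) ^ m)
        * ∏ j ∈ range m, (1 - z * p ^ (-(j : ℤ) - 1)) := by
    rw [prod_congr rfl hterm, prod_mul_distrib]
    congr 1
    have : ∀ j ∈ range m, (-(p ^ (j + 1))) * z⁻¹ = (-1) * p ^ (j + 1) * z⁻¹ := by
      intro j _; ring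
    rw [prod_congr rfl this, prod_mul_distrib, prod_mul_distrib, prod_const, prod_const,
      prod_pow_eq_pow_sum, card_range]
  -- Step 2 : merge the two z-products
  have hP12 : (∏ j ∈ range m, (1 - z * p ^ j)) * ∏ j ∈ range m, (1 - z * p ^ (-(j : ℤ) - 1))
      = ∏ i ∈ range (2 * m), (1 + (-(z * p ^ (-(m : ℤ)))) * p ^ (i : ℤ)) := by
    have hfac : ∀ i : ℕ, (1 + (-(z * p ^ (-(m : ℤ)))) * p ^ (i : ℤ)) = 1 - z * p ^ ((i : ℤ) - m) := by
      intro i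
      rw [show ((i : ℤ) - m) = -(m : ℤ) + i by ring, zpow_add₀ hp0]
      ring
    rw [prod_congr rfl (fun i _ => hfac i), two_mul, prod_range_add]
    rw [mul_comm]
    congr 1
    · rw [← prod_range_reflect]
      apply prod_congr rfl
      intro i hi
      rw [mem_range] at hi
      congr 2
      have h1 : ((m - 1 - i : ℕ) : ℤ) = (m : ℤ) - 1 - i := by omega
      rw [h1]
      congr 1
      ring
    · apply prod_congr rfl
      intro i _
      congr 2
      rw [show ((m + i : ℕ) : ℤ) - (m : ℤ) = ((i : ℕ) : ℤ) by push_cast; ring, zpow_natCast]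
  rw [hP2, ← mul_assoc, mul_comm (∏ j ∈ range m, (1 - z * p ^ j)), mul_assoc, hP12,
    gauss p hp0 hD, mul_sum]
  apply sum_congr rfl
  intro j hj
  -- per-term computation
  have e1 : ((-1 : ℂ)) ^ m * (-1 : ℂ) ^ j = (-1 : ℂ) ^ ((j : ℤ) - m) := by
    rw [← pow_add]
    have h2 : ((-1 : ℂ)) ^ (2 * m : ℕ) = 1 := by
      rw [pow_mul]; norm_num
    have : (-1 : ℂ) ^ ((j : ℤ) - m) = (-1 : ℂ) ^ (((m + j : ℕ) : ℤ)) / (-1 : ℂ) ^ (((2 * m : ℕ) : ℤ)) := by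
      rw [← zpow_sub₀ (by norm_num : (-1 : ℂ) ≠ 0)]
      congr 1; push_cast; ring
    rw [this, zpow_natCast, zpow_natCast, h2, div_one]
  have e3 : (z⁻¹) ^ m * z ^ j = z ^ ((j : ℤ) - m) := by
    rw [show ((j : ℤ) - m) = -(m : ℤ) + j by ring, zpow_add₀ hz, zpow_neg, zpow_natCast,
      zpow_natCast, inv_pow]
  have e2 : p ^ (∑ j ∈ range m, (j + 1)) * (p ^ (((j : ℤ)) * ((j : ℤ) - 1) / 2) * (p ^ (-(m : ℤ))) ^ j)
      = p ^ ((((j : ℤ) - m)) * ((((j : ℤ) - m)) - 1) / 2) := by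
    have hm : (p ^ (-(m : ℤ))) ^ j = p ^ ((-(m : ℤ)) * j) := by
      rw [← zpow_natCast (p ^ (-(m : ℤ))) j, ← zpow_mul]
    rw [hm, ← zpow_natCast p (∑ j ∈ range m, (j + 1)), ← zpow_add₀ hp0, ← zpow_add₀ hp0]
    congr 1
    have h2S : 2 * ((∑ j ∈ range m, (j + 1) : ℕ) : ℤ) = (m : ℤ) * (m + 1) := by
      have h := hSum2 m; exact_mod_cast h
    have h2T : 2 * ((j : ℤ) * ((j : ℤ) - 1) / 2) = (j : ℤ) * ((j : ℤ) - 1) := by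
      rw [Int.mul_ediv_cancel']
      have := Int.even_mul_succ_self ((j : ℤ) - 1)
      rw [show ((j : ℤ) - 1 + 1) = (j : ℤ) by ring] at this
      rw [mul_comm]
      exact this.two_dvd
    have h2n : 2 * ((((j : ℤ) - m)) * ((((j : ℤ) - m)) - 1) / 2) = (((j : ℤ) - m)) * ((((j : ℤ) - m)) - 1) := by
      rw [Int.mul_ediv_cancel']
      have := Int.even_mul_succ_self ((j : ℤ) - m - 1)
      rw [show ((j : ℤ) - m - 1 + 1) = (j : ℤ) - m by ring] at this
      rw [mul_comm]
      exact this.two_dvd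
    have hring : ((j : ℤ) - m) * (((j : ℤ) - m) - 1)
        = (m : ℤ) * (m + 1) + (j : ℤ) * ((j : ℤ) - 1) - 2 * ((m : ℤ) * j) := by ring
    linarith [h2S, h2T, h2n, hring]
  calc ((-1 : ℂ)) ^ m * p ^ (∑ j ∈ range m, (j + 1)) * (z⁻¹) ^ m
        * (p ^ (((j : ℤ)) * ((j : ℤ) - 1) / 2) * gb p (2 * m) j * (-(z * p ^ (-(m : ℤ)))) ^ j)
      = (((-1 : ℂ)) ^ m * (-1 : ℂ) ^ j)
        * (p ^ (∑ j ∈ range m, (j + 1)) * (p ^ (((j : ℤ)) * ((j : ℤ) - 1) / 2) * (p ^ (-(m : ℤ))) ^ j))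
        * ((z⁻¹) ^ m * z ^ j) * gb p (2 * m) j := by
        rw [neg_pow (z * p ^ (-(m : ℤ))), mul_pow]; ring
    _ = _ := by rw [e1, e2, e3]

lemma summable_log (p x : ℂ) (hp : ‖p‖ < 1) :
    Summable (fun i : ℕ => Complex.log (1 - x * p ^ i)) := by
  apply Summable.of_norm_bounded_eventually_nat
    (g := fun i => 3 / 2 * (‖x‖ * ‖p‖ ^ i))
  · exact (summable_geometric_of_lt_one (norm_nonneg p) hp).mul_left _ |>.mul_left _
  · have ht : Tendsto (fun i : ℕ => x * p ^ i) atTop (𝓝 0) := by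
      simpa using (tendsto_pow_atTop_nhds_zero_of_norm_lt_one hp).const_mul x
    have hev : ∀ᶠ i in atTop, ‖x * p ^ i‖ ≤ 1 / 2 := by
      have := ht.norm
      simp only [norm_zero] at this
      exact this.eventually_le_const (by norm_num)
    filter_upwards [hev] with i hi
    have h := Complex.norm_log_one_add_half_le_self (z := -(x * p ^ i)) (by simpa using hi)
    rw [show (1 : ℂ) + -(x * p ^ i) = 1 - x * p ^ i by ring] at h
    calc ‖Complex.log (1 - x * p ^ i)‖ ≤ 3 / 2 * ‖-(x * p ^ i)‖ := h
      _ = 3 / 2 * (‖x‖ * ‖p‖ ^ i) := by rw [norm_neg, norm_mul, norm_pow]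

lemma tendsto_partial (p : ℂ) (hp : ‖p‖ < 1) (x : ℂ) :
    Tendsto (fun m => ∏ j ∈ range m, (1 - x * p ^ j)) atTop (𝓝 (qpoch x p)) := by
  by_cases hne : ∀ j, 1 - x * p ^ j ≠ 0
  · have hprod : HasProd (fun j => 1 - x * p ^ j) (∏' n : ℕ, (1 - x * p ^ n)) :=
      (Complex.multipliable_of_summable_log (summable_log p x hp)).hasProd
    exact hprod.tendsto_prod_nat
  · push_neg at hne
    obtain ⟨j0, hj0⟩ := hne
    have hzero : HasProd (fun j => 1 - x * p ^ j) 0 := by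
      rw [HasProd]
      have hev : ∀ᶠ s : Finset ℕ in atTop, (∏ b ∈ s, (1 - x * p ^ b)) = 0 := by
        filter_upwards [eventually_ge_atTop ({j0} : Finset ℕ)] with s hs
        exact prod_eq_zero (hs (mem_singleton_self j0)) hj0
      exact Tendsto.congr' (hev.mono fun s hs => hs.symm) tendsto_const_nhds
    have hq : qpoch x p = 0 := hzero.tprod_eq
    rw [hq]
    have hev : ∀ᶠ m in atTop, (∏ j ∈ range m, (1 - x * p ^ j)) = 0 := by
      filter_upwards [eventually_ge_atTop (j0 + 1)] with m hm
      exact prod_eq_zero (mem_range.2 (by omega)) hj0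
    exact Tendsto.congr' (hev.mono fun m hm => hm.symm) tendsto_const_nhds

lemma one_sub_ne (p : ℂ) (hp : ‖p‖ < 1) (i : ℕ) : (1 : ℂ) - p * p ^ i ≠ 0 := by
  intro h
  have h1 : p * p ^ i = 1 := by linear_combination -h
  have h2 : ‖p * p ^ i‖ = 1 := by rw [h1]; simp
  have h3 : ‖p * p ^ i‖ < 1 := by
    rw [norm_mul, norm_pow, ← pow_succ']
    exact pow_lt_one₀ (norm_nonneg p) hp (Nat.succ_ne_zero i)
  linarith

lemma Dp_eq (p : ℂ) (j : ℕ) : Dp p j = ∏ i ∈ range j, (1 - p * p ^ i) := by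
  apply prod_congr rfl
  intro i _
  congr 1
  rw [show ((i : ℤ) + 1) = ((i + 1 : ℕ) : ℤ) by push_cast; ring, zpow_natCast, pow_succ']

lemma tendsto_Dp (p : ℂ) (hp : ‖p‖ < 1) : Tendsto (Dp p) atTop (𝓝 (qpoch p p)) :=
  (tendsto_partial p hp p).congr fun m => (Dp_eq p m).symm

lemma Dp_ne (p : ℂ) (hp : ‖p‖ < 1) (j : ℕ) : Dp p j ≠ 0 := by
  rw [Dp_eq]
  exact prod_ne_zero_iff.2 fun i _ => one_sub_ne p hp i

lemma qpoch_pp_ne (p : ℂ) (hp : ‖p‖ < 1) : qpoch p p ≠ 0 := by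
  have h := Complex.cexp_tsum_eq_tprod (f := fun i => 1 - p * p ^ i)
    (fun i => one_sub_ne p hp i) (summable_log p p hp)
  have h2 := h
  rw [qpoch, ← h2]
  exact Complex.exp_ne_zero _

lemma Dp_split (p : ℂ) (N j : ℕ) (hj : j ≤ N) : Dp p N = Dp p (N - j) * Ap p N j := by
  have hN : N - j + j = N := by omega
  have h := prod_range_add (fun i => (1 : ℂ) - p ^ ((i : ℤ) + 1)) (N - j) j
  rw [hN] at h
  rw [Dp, h]
  congr 1
  apply prod_congr rfl
  intro i _
  congr 1
  push_cast [Nat.cast_sub hj]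
  ring

lemma bound_Ap (p : ℂ) (hp : ‖p‖ < 1) (N j : ℕ) (hj : j ≤ N) :
    ‖Ap p N j‖ ≤ Real.exp ((1 - ‖p‖)⁻¹) := by
  rw [Ap, norm_prod]
  have h1 : ∀ i ∈ range j, ‖(1 : ℂ) - p ^ ((N : ℤ) - j + i + 1)‖ ≤ Real.exp (‖p‖ ^ (i + 1)) := by
    intro i hi
    rw [mem_range] at hi
    have he : ((N : ℤ) - j + i + 1) = (((N - j + i + 1 : ℕ)) : ℤ) := by push_cast [Nat.cast_sub hj]; ring
    have h2 : ‖(1 : ℂ) - p ^ ((N : ℤ) - j + i + 1)‖ ≤ 1 + ‖p‖ ^ (N - j + i + 1) := by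
      calc ‖(1 : ℂ) - p ^ ((N : ℤ) - j + i + 1)‖ ≤ ‖(1 : ℂ)‖ + ‖p ^ ((N : ℤ) - j + i + 1)‖ :=
            norm_sub_le _ _
        _ = 1 + ‖p‖ ^ (N - j + i + 1) := by rw [norm_one, he, zpow_natCast, norm_pow]
    have h3 : ‖p‖ ^ (N - j + i + 1) ≤ ‖p‖ ^ (i + 1) :=
      pow_le_pow_of_le_one (norm_nonneg p) hp.le (by omega)
    calc ‖(1 : ℂ) - p ^ ((N : ℤ) - j + i + 1)‖ ≤ 1 + ‖p‖ ^ (i + 1) := by linarith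
      _ ≤ Real.exp (‖p‖ ^ (i + 1)) := by
          have := Real.add_one_le_exp (‖p‖ ^ (i + 1)); linarith
  calc ∏ i ∈ range j, ‖(1 : ℂ) - p ^ ((N : ℤ) - j + i + 1)‖
      ≤ ∏ i ∈ range j, Real.exp (‖p‖ ^ (i + 1)) :=
        prod_le_prod (fun i _ => norm_nonneg _) h1
    _ = Real.exp (∑ i ∈ range j, ‖p‖ ^ (i + 1)) := by rw [Real.exp_sum]
    _ ≤ Real.exp ((1 - ‖p‖)⁻¹) := by
        apply Real.exp_le_exp.2
        have hs : ∀ i ∈ range j, ‖p‖ ^ (i + 1) ≤ ‖p‖ ^ i := fun i _ =>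
          pow_le_pow_of_le_one (norm_nonneg p) hp.le (by omega)
        calc ∑ i ∈ range j, ‖p‖ ^ (i + 1) ≤ ∑ i ∈ range j, ‖p‖ ^ i := sum_le_sum hs
          _ ≤ ∑' i : ℕ, ‖p‖ ^ i := Summable.sum_le_tsum _ (fun i _ => by positivity)
              (summable_geometric_of_lt_one (norm_nonneg p) hp)
          _ = (1 - ‖p‖)⁻¹ := tsum_geometric_of_lt_one (norm_nonneg p) hp

lemma exists_delta (p : ℂ) (hp : ‖p‖ < 1) : ∃ δ : ℝ, 0 < δ ∧ ∀ j, δ ≤ ‖Dp p j‖ := by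
  have hL : 0 < ‖qpoch p p‖ := norm_pos_iff.2 (qpoch_pp_ne p hp)
  have hev : ∀ᶠ j in atTop, ‖qpoch p p‖ / 2 ≤ ‖Dp p j‖ :=
    (tendsto_Dp p hp).norm.eventually_const_le (by linarith)
  obtain ⟨M, hM⟩ := eventually_atTop.1 hev
  have hne : (range (M + 1)).Nonempty := nonempty_range_iff.2 (Nat.succ_ne_zero M)
  set δ₀ := (range (M + 1)).inf' hne (fun j => ‖Dp p j‖) with hδ₀
  refine ⟨min (‖qpoch p p‖ / 2) δ₀, ?_, ?_⟩
  · apply lt_min (by linarith)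
    rw [hδ₀, Finset.lt_inf'_iff]
    exact fun j _ => norm_pos_iff.2 (Dp_ne p hp j)
  · intro j
    rcases le_or_gt j M with h | h
    · exact le_trans (min_le_right _ _) (inf'_le _ (mem_range.2 (by omega)))
    · exact le_trans (min_le_left _ _) (hM j (by omega))

lemma summable_aux (c r : ℝ) (hc : 0 ≤ c) (hc1 : c < 1) (hr : 0 ≤ r) (T : ℕ → ℕ)
    (hT : ∀ k, ∃ d, T (k + 1) = T k + d ∧ k ≤ d) :
    Summable (fun k : ℕ => c ^ T k * r ^ k) := by
  apply summable_of_ratio_norm_eventually_le (r := 1 / 2) (by norm_num)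
  have hev : ∀ᶠ k : ℕ in atTop, c ^ k * r ≤ 1 / 2 :=
    (((tendsto_pow_atTop_nhds_zero_of_lt_one hc hc1).mul_const r).norm.congr
      (fun k => by rw [Real.norm_of_nonneg (by positivity)])).eventually_le_const (by norm_num)
  filter_upwards [hev] with k hk
  have h1 : 0 ≤ c ^ T k * r ^ k := by positivity
  rw [Real.norm_of_nonneg (by positivity), Real.norm_of_nonneg h1]
  obtain ⟨d, hd, hkd⟩ := hT k
  calc c ^ T (k + 1) * r ^ (k + 1) = c ^ T k * c ^ d * (r ^ k * r) := by
        rw [hd, pow_add, pow_succ]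
    _ ≤ c ^ T k * c ^ k * (r ^ k * r) := by
        apply mul_le_mul_of_nonneg_right _ (by positivity)
        exact mul_le_mul_of_nonneg_left (pow_le_pow_of_le_one hc hc1.le hkd) (by positivity)
    _ = (c ^ k * r) * (c ^ T k * r ^ k) := by ring
    _ ≤ 1 / 2 * (c ^ T k * r ^ k) := mul_le_mul_of_nonneg_right hk h1

lemma tri_nonneg (n : ℤ) : 0 ≤ n * (n - 1) := by
  rcases le_or_gt 1 n with h | h
  · exact mul_nonneg (by omega) (by omega)
  · nlinarith [mul_nonneg (show (0:ℤ) ≤ -n by omega) (show (0:ℤ) ≤ -(n-1) by omega)]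

lemma summable_bound (c r : ℝ) (hc : 0 ≤ c) (hc1 : c < 1) (hr : 0 ≤ r) :
    Summable (fun n : ℤ => c ^ ((n * (n - 1) / 2).toNat) * r ^ n.natAbs) := by
  apply Summable.of_nat_of_neg
  · apply (summable_aux c r hc hc1 hr (fun k => (((k : ℤ)) * ((k : ℤ) - 1) / 2).toNat) ?_).congr
    · intro k
      simp
    · intro k
      refine ⟨k, ?_, le_refl k⟩
      show ((((k + 1 : ℕ) : ℤ)) * (((k + 1 : ℕ) : ℤ) - 1) / 2).toNat
        = (((k : ℤ)) * ((k : ℤ) - 1) / 2).toNat + k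
      have h1 : ((k + 1 : ℕ) : ℤ) * (((k + 1 : ℕ) : ℤ) - 1) = (k : ℤ) * ((k : ℤ) - 1) + 2 * k := by
        push_cast; ring
      have hB : 0 ≤ (k : ℤ) * ((k : ℤ) - 1) := tri_nonneg _
      set B : ℤ := (k : ℤ) * ((k : ℤ) - 1) with hBdef
      set A : ℤ := ((k + 1 : ℕ) : ℤ) * (((k + 1 : ℕ) : ℤ) - 1) with hAdef
      omega
  · apply (summable_aux c r hc hc1 hr (fun k => ((-(k : ℤ)) * (-(k : ℤ) - 1) / 2).toNat) ?_).congr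
    · intro k
      simp
    · intro k
      refine ⟨k + 1, ?_, by omega⟩
      show ((-((k + 1 : ℕ) : ℤ)) * (-((k + 1 : ℕ) : ℤ) - 1) / 2).toNat
        = ((-(k : ℤ)) * (-(k : ℤ) - 1) / 2).toNat + (k + 1)
      have h1 : (-((k + 1 : ℕ) : ℤ)) * (-((k + 1 : ℕ) : ℤ) - 1)
          = (-(k : ℤ)) * (-(k : ℤ) - 1) + 2 * (k + 1) := by push_cast; ring
      have hB : 0 ≤ (-(k : ℤ)) * (-(k : ℤ) - 1) := by
        have h2 : (-(k : ℤ)) * (-(k : ℤ) - 1) = k * (k + 1) := by ring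
        rw [h2]; positivity
      set B : ℤ := (-(k : ℤ)) * (-(k : ℤ) - 1) with hBdef
      set A : ℤ := (-((k + 1 : ℕ) : ℤ)) * (-((k + 1 : ℕ) : ℤ) - 1) with hAdef
      omega

lemma znorm (z : ℂ) (n : ℤ) : ‖z ^ n‖ ≤ (max ‖z‖ ‖z⁻¹‖) ^ n.natAbs := by
  rcases n with k | k
  · rw [Int.ofNat_eq_coe, zpow_natCast, norm_pow]
    simpa using pow_le_pow_left₀ (norm_nonneg z) (le_max_left ‖z‖ ‖z⁻¹‖) k
  · rw [zpow_negSucc, ← inv_pow, norm_pow]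
    simpa using pow_le_pow_left₀ (norm_nonneg z⁻¹) (le_max_right ‖z‖ ‖z⁻¹‖) (k + 1)

end JTP

open JTP in
theorem jacobi_triple_product (p : ℂ) (hp : ‖p‖ < 1) (z : ℂ) (hz : z ≠ 0) :
    ∑' n : ℤ, (-1 : ℂ) ^ n * p ^ (n * (n - 1) / 2) * z ^ n = jtheta p z := by
  have hpn : ‖p‖ < 1 := hp
  rcases eq_or_ne p 0 with rfl | hp0
  · -- degenerate case p = 0
    have hL : ∑' n : ℤ, (-1 : ℂ) ^ n * (0 : ℂ) ^ (n * (n - 1) / 2) * z ^ n = 1 - z := by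
      rw [tsum_eq_sum (s := ({0, 1} : Finset ℤ)) ?_]
      · rw [Finset.sum_pair (by norm_num : (0 : ℤ) ≠ 1)]
        norm_num
        ring
      · intro n hn
        simp only [Finset.mem_insert, Finset.mem_singleton] at hn
        push_neg at hn
        have h2 : 2 ≤ n * (n - 1) := by
          rcases le_or_gt 2 n with h | h
          · nlinarith
          · have h3 : n ≤ -1 := by omega
            nlinarith
        have he : n * (n - 1) / 2 ≠ 0 := by
          have : 1 ≤ n * (n - 1) / 2 := by
            rw [Int.le_ediv_iff_mul_le (by norm_num : (0:ℤ) < 2)]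
            omega
          omega
        rw [zero_zpow _ he]
        ring
    rw [hL, jtheta]
    have h1 : qpoch z 0 = 1 - z := by
      rw [qpoch, tprod_eq_mulSingle 0 ?_]
      · norm_num
      · intro b hb
        rw [zero_pow hb]
        ring
    have h2 : qpoch (0 / z) 0 = 1 := by
      simp [qpoch]
    have h3 : qpoch 0 0 = 1 := by
      simp [qpoch]
    rw [h1, h2, h3, mul_one, mul_one]
  · -- main case
    have hD : ∀ j, Dp p j ≠ 0 := Dp_ne p hpn
    have hLne : qpoch p p ≠ 0 := qpoch_pp_ne p hpn
    set R : ℝ := max ‖z‖ ‖z⁻¹‖ with hR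
    have hR0 : 0 ≤ R := le_trans (norm_nonneg z) (le_max_left _ _)
    set f : ℕ → ℤ → ℂ := fun m n =>
      if n.natAbs ≤ m then
        (-1 : ℂ) ^ n * p ^ (n * (n - 1) / 2) * z ^ n * gb p (2 * m) (n + m).toNat
      else 0 with hf
    set a : ℤ → ℂ := fun n =>
      (-1 : ℂ) ^ n * p ^ (n * (n - 1) / 2) * z ^ n * (qpoch p p)⁻¹ with ha
    -- tsum of f m equals finite products
    have htsum : ∀ m, ∑' n : ℤ, f m n
        = (∏ j ∈ range m, (1 - z * p ^ j)) * (∏ j ∈ range m, (1 - (p / z) * p ^ j)) := by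
      intro m
      rw [tsum_eq_sum (s := Finset.Icc (-(m : ℤ)) m) ?_]
      · rw [finite_id p hp0 hD z hz m]
        apply Finset.sum_nbij' (i := fun n => (n + (m : ℤ)).toNat) (j := fun k => (k : ℤ) - m)
        · intro n hn
          simp only [Finset.mem_Icc] at hn
          simp only [Finset.mem_range]
          omega
        · intro k hk
          simp only [Finset.mem_range] at hk
          simp only [Finset.mem_Icc]
          omega
        · intro n hn
          simp only [Finset.mem_Icc] at hn
          omega
        · intro k hk
          simp only [Finset.mem_range] at hk
          omega
        · intro n hn
          simp only [Finset.mem_Icc] at hn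
          have h1 : (((n + (m : ℤ)).toNat : ℤ)) - m = n := by omega
          simp only [hf, h1]
          rw [if_pos (by omega)]
      · intro n hn
        simp only [Finset.mem_Icc] at hn
        simp only [hf]
        rw [if_neg (by omega)]
    -- limit of the products
    have hlim_prod : Tendsto (fun m => ∑' n : ℤ, f m n) atTop
        (𝓝 (qpoch z p * qpoch (p / z) p)) :=
      ((tendsto_partial p hpn z).mul (tendsto_partial p hpn (p / z))).congr
        fun m => (htsum m).symm
    -- pointwise limits
    have hab : ∀ n : ℤ, Tendsto (fun m => f m n) atTop (𝓝 (a n)) := by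
      intro n
      have hmap1 : Tendsto (fun m : ℕ => (n + (m : ℤ)).toNat) atTop atTop :=
        tendsto_atTop_atTop.2 fun b => ⟨b + n.natAbs, fun m hm => by omega⟩
      have hmap2 : Tendsto (fun m : ℕ => 2 * m) atTop atTop :=
        tendsto_atTop_atTop.2 fun b => ⟨b, fun m hm => by omega⟩
      have hmap3 : Tendsto (fun m : ℕ => 2 * m - (n + (m : ℤ)).toNat) atTop atTop :=
        tendsto_atTop_atTop.2 fun b => ⟨b + n.natAbs, fun m hm => by omega⟩
      have h1 : Tendsto (fun m : ℕ => Dp p ((n + (m : ℤ)).toNat)) atTop (𝓝 (qpoch p p)) :=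
        (tendsto_Dp p hpn).comp hmap1
      have h2 : Tendsto (fun m : ℕ => Ap p (2 * m) ((n + (m : ℤ)).toNat)) atTop (𝓝 1) := by
        have h3 : Tendsto (fun m : ℕ => Dp p (2 * m)) atTop (𝓝 (qpoch p p)) :=
          (tendsto_Dp p hpn).comp hmap2
        have h4 : Tendsto (fun m : ℕ => Dp p (2 * m - (n + (m : ℤ)).toNat)) atTop
            (𝓝 (qpoch p p)) := (tendsto_Dp p hpn).comp hmap3
        have h5 := h3.div h4 hLne
        rw [div_self hLne] at h5
        apply Tendsto.congr' ?_ h5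
        filter_upwards [eventually_ge_atTop n.natAbs] with m hm
        have hj : (n + (m : ℤ)).toNat ≤ 2 * m := by omega
        have := Dp_split p (2 * m) ((n + (m : ℤ)).toNat) hj
        simp only [Pi.div_apply]
        rw [this]
        exact mul_div_cancel_left₀ _ (hD _)
      have hgb : Tendsto (fun m : ℕ => gb p (2 * m) ((n + (m : ℤ)).toNat)) atTop
          (𝓝 ((qpoch p p))⁻¹) := by
        have h6 := h2.div h1 hLne
        rw [← one_div]
        exact h6
      have h7 := hgb.const_mul ((-1 : ℂ) ^ n * p ^ (n * (n - 1) / 2) * z ^ n)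
      apply Tendsto.congr' ?_ h7
      filter_upwards [eventually_ge_atTop n.natAbs] with m hm
      simp only [hf]
      rw [if_pos hm]
    -- uniform bound
    obtain ⟨δ, hδ, hδle⟩ := exists_delta p hpn
    set bound : ℤ → ℝ := fun n =>
      Real.exp ((1 - ‖p‖)⁻¹) / δ * (‖p‖ ^ ((n * (n - 1) / 2).toNat) * R ^ n.natAbs)
      with hbound
    have h_bound : ∀ m : ℕ, ∀ n : ℤ, ‖f m n‖ ≤ bound n := by
      intro m n
      simp only [hf, hbound]
      split_ifs with h
      · have hT0 : 0 ≤ n * (n - 1) / 2 := Int.ediv_nonneg (tri_nonneg n) (by norm_num)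
        have e1 : ‖(-1 : ℂ) ^ n‖ = 1 := by
          rw [norm_zpow, norm_neg, norm_one, one_zpow]
        have e2 : ‖p ^ (n * (n - 1) / 2)‖ = ‖p‖ ^ ((n * (n - 1) / 2).toNat) := by
          rw [norm_zpow]
          conv_lhs => rw [← Int.toNat_of_nonneg hT0]
          rw [zpow_natCast]
        have e3 : ‖z ^ n‖ ≤ R ^ n.natAbs := znorm z n
        have e4 : ‖gb p (2 * m) ((n + (m : ℤ)).toNat)‖ ≤ Real.exp ((1 - ‖p‖)⁻¹) / δ := by
          rw [gb, norm_div]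
          exact div_le_div₀ (Real.exp_nonneg _)
            (bound_Ap p hpn _ _ (by omega)) hδ (hδle _)
        calc ‖(-1 : ℂ) ^ n * p ^ (n * (n - 1) / 2) * z ^ n * gb p (2 * m) ((n + (m : ℤ)).toNat)‖
            = ‖p‖ ^ ((n * (n - 1) / 2).toNat) * ‖z ^ n‖ * ‖gb p (2 * m) ((n + (m : ℤ)).toNat)‖ := by
              rw [norm_mul, norm_mul, norm_mul, e1, e2, one_mul]
          _ ≤ ‖p‖ ^ ((n * (n - 1) / 2).toNat) * R ^ n.natAbs * (Real.exp ((1 - ‖p‖)⁻¹) / δ) := by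
              gcongr
          _ = Real.exp ((1 - ‖p‖)⁻¹) / δ * (‖p‖ ^ ((n * (n - 1) / 2).toNat) * R ^ n.natAbs) := by
              ring
      · simp only [norm_zero]
        positivity
    have h_sum : Summable bound :=
      (summable_bound ‖p‖ R (norm_nonneg p) hpn hR0).mul_left _
    have hTan := tendsto_tsum_of_dominated_convergence h_sum hab
      (Eventually.of_forall h_bound)
    have hkey : ∑' n : ℤ, a n = qpoch z p * qpoch (p / z) p :=
      tendsto_nhds_unique hTan hlim_prod
    have h8 : (∑' n : ℤ, (-1 : ℂ) ^ n * p ^ (n * (n - 1) / 2) * z ^ n) * (qpoch p p)⁻¹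
        = qpoch z p * qpoch (p / z) p := by
      rw [← tsum_mul_right]
      exact hkey
    rw [jtheta, ← h8]
    field_simp
end

section
/- Let A be an associative algebra over a field F, acting on an F-vector space V, containing families L⁺_{ij}(z) (1 ≤ i,j ≤ N) of operators depending on a spectral parameter, and suppose the following exchange relations hold as identities of operator-valued functions (for scalars b̄(z), c(z,Π*), c̄(z,Π) valued in F, with b̄(z/α) ≠ 0): (i) for k+1 ≤ j ≤ i ≤ N: b̄(z₁/z₂)L⁺_{ij}(z₁)L⁺_{k−1,k}(z₂) + c̄(z₁/z₂, Π_{k−1,i})L⁺_{k−1,j}(z₁)L⁺_{ik}(z₂) = L⁺_{k−1,j}(z₂)L⁺_{ik}(z₁)c(z₁/z₂, Π*_{kj}) + L⁺_{k−1,k}(z₂)L⁺_{ij}(z₁)b̄(z₁/z₂); (ii) for k ≤ i ≤ N: b̄(z₁/z₂)L⁺_{ik}(z₁)L⁺_{k−1,k}(z₂) + c̄(z₁/z₂, Π_{k−1,i})L⁺_{k−1,k}(z₁)L⁺_{ik}(z₂) = L⁺_{k−1,k}(z₂)L⁺_{ik}(z₁). Let η ∈ V satisfy L⁺_{ij}(z)·η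 = 0 for all k ≤ j < i ≤ N, L⁺_{ii}(z)·η = μ_i(z)η for k ≤ i ≤ N (scalars μ_i(z)), and L⁺_{kk}(α)·η = 0 for some fixed α. Then the vector η' = L⁺_{k−1,k}(α)·η satisfies: L⁺_{ij}(z)·η' = 0 for k ≤ j < i ≤ N; L⁺_{kk}(z)·η' = (1/b̄(z/α)) μ_k(z) η'; and L⁺_{ii}(z)·η' = μ_i(z) η' for k+1 ≤ i ≤ N. -/
/-- Abstract singular-vector lemma for the elliptic quantum group `E_{q,p}(ĝl_N)`:
if `η` is a singular vector with respect to the subalgebra generated by the `L⁺_{ij}`,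
`k ≤ i,j ≤ N`, and moreover `L⁺_{kk}(α)·η = 0`, then `L⁺_{k−1,k}(α)·η` is again singular,
with `k`-th weight multiplied by `1/b̄(z/α)`. -/
theorem singular_vector_lemma (F : Type*) [Field F] (V : Type*) [AddCommGroup V] [Module F V]
    (N k : ℕ) (hk : 1 ≤ k) (hkN : k ≤ N)
    (L : ℕ → ℕ → F → (V →ₗ[F] V))
    (bbar : F → F) (cstar cbar : ℕ → F → F)
    (hrel1 : ∀ i j, k + 1 ≤ j → j ≤ i → i ≤ N → ∀ z₁ z₂ : F,
      bbar (z₁ / z₂) • (L i j z₁ ∘ₗ L (k - 1) k z₂)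
          + cbar i (z₁ / z₂) • (L (k - 1) j z₁ ∘ₗ L i k z₂)
        = cstar j (z₁ / z₂) • (L (k - 1) j z₂ ∘ₗ L i k z₁)
          + bbar (z₁ / z₂) • (L (k - 1) k z₂ ∘ₗ L i j z₁))
    (hrel2 : ∀ i, k ≤ i → i ≤ N → ∀ z₁ z₂ : F,
      bbar (z₁ / z₂) • (L i k z₁ ∘ₗ L (k - 1) k z₂)
          + cbar i (z₁ / z₂) • (L (k - 1) k z₁ ∘ₗ L i k z₂)
        = L (k - 1) k z₂ ∘ₗ L i k z₁)
    (η : V) (μ : ℕ → F → F)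
    (hs1 : ∀ i j z, k ≤ j → j < i → i ≤ N → L i j z η = 0)
    (hs2 : ∀ i z, k ≤ i → i ≤ N → L i i z η = μ i z • η)
    (α : F) (hα : L k k α η = 0)
    (hb : ∀ z : F, bbar (z / α) ≠ 0) :
    (∀ i j z, k ≤ j → j < i → i ≤ N → L i j z (L (k - 1) k α η) = 0) ∧
    (∀ z : F, L k k z (L (k - 1) k α η)
        = ((bbar (z / α))⁻¹ * μ k z) • (L (k - 1) k α η)) ∧
    (∀ i z, k + 1 ≤ i → i ≤ N → L i i z (L (k - 1) k α η) = μ i z • (L (k - 1) k α η)) := by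
  constructor
  · intro i j z hkj hji hiN
    rcases eq_or_lt_of_le hkj with hjk | hjk
    · -- j = k
      subst hjk
      have h := DFunLike.congr_fun (hrel2 i (le_of_lt hji) hiN z α) η
      simp only [LinearMap.add_apply, LinearMap.smul_apply, LinearMap.comp_apply] at h
      rw [hs1 i k z le_rfl hji hiN, hs1 i k α le_rfl hji hiN] at h
      simp only [map_zero, smul_zero, add_zero] at h
      exact (smul_eq_zero.mp h).resolve_left (hb z)
    · -- k + 1 ≤ j
      have h := DFunLike.congr_fun (hrel1 i j hjk (le_of_lt hji) hiN z α) η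
      simp only [LinearMap.add_apply, LinearMap.smul_apply, LinearMap.comp_apply] at h
      rw [hs1 i k z le_rfl (lt_of_le_of_lt (Nat.le_of_succ_le hjk) hji) hiN,
        hs1 i k α le_rfl (lt_of_le_of_lt (Nat.le_of_succ_le hjk) hji) hiN,
        hs1 i j z (Nat.le_of_succ_le hjk) hji hiN] at h
      simp only [map_zero, smul_zero, add_zero] at h
      exact (smul_eq_zero.mp h).resolve_left (hb z)
  constructor
  · intro z
    have h := DFunLike.congr_fun (hrel2 k le_rfl hkN z α) η
    simp only [LinearMap.add_apply, LinearMap.smul_apply, LinearMap.comp_apply] at h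
    rw [hα, hs2 k z le_rfl hkN] at h
    simp only [map_zero, smul_zero, add_zero, map_smul] at h
    rw [mul_smul, ← h, ← smul_assoc, smul_eq_mul, inv_mul_cancel₀ (hb z), one_smul]
  · intro i z hki hiN
    have hik : k < i := hki
    have h := DFunLike.congr_fun (hrel1 i i hki le_rfl hiN z α) η
    simp only [LinearMap.add_apply, LinearMap.smul_apply, LinearMap.comp_apply] at h
    rw [hs1 i k z le_rfl hik hiN, hs1 i k α le_rfl hik hiN, hs2 i z (le_of_lt hik) hiN] at h
    simp only [map_zero, smul_zero, add_zero, zero_add, map_smul] at h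
    exact smul_right_injective V (hb z) h
end
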